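/- arXiv:1710.02072 — 7 statements merged into one kernel-verified Lean document; each statement's English description precedes it below -/
import Mathlib

section
/- Let A be a block matrix of the form [[B, C], [0, D]] where B, C, D are nonnegative real matrices and the lower-left block is zero. Then the nonnegative rank of A is at least the nonnegative rank of B plus the nonnegative rank of D. -/
noncomputable def nnRank {α β : Type} [Fintype α] [Fintype β] (A : Matrix α β ℝ) : ℕ :=
  sInf {r : ℕ | ∃ u : Fin r → α → ℝ, ∃ v : Fin r → β → ℝ,
    (∀ t i, 0 ≤ u t i) ∧ (∀ t j, 0 ≤ v t j) ∧ ∀ i j, A i j = ∑ t, u t i * v t j}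

lemma nnRank_le_card {α β γ : Type} [Fintype α] [Fintype β] [Fintype γ]
    (A : Matrix α β ℝ) (u : γ → α → ℝ) (v : γ → β → ℝ)
    (hu : ∀ t i, 0 ≤ u t i) (hv : ∀ t j, 0 ≤ v t j)
    (hA : ∀ i j, A i j = ∑ t, u t i * v t j) :
    nnRank A ≤ Fintype.card γ := by
  apply Nat.sInf_le
  refine ⟨fun t => u ((Fintype.equivFin γ).symm t),
    fun t => v ((Fintype.equivFin γ).symm t), fun t i => hu _ i, fun t j => hv _ j,
    fun i j => ?_⟩
  rw [hA i j]
  exact (Equiv.sum_comp (Fintype.equivFin γ).symm (fun t => u t i * v t j)).symm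

lemma nnRank_mem {α β : Type} [Fintype α] [Fintype β] (A : Matrix α β ℝ)
    (hA : ∀ i j, 0 ≤ A i j) :
    nnRank A ∈ {r : ℕ | ∃ u : Fin r → α → ℝ, ∃ v : Fin r → β → ℝ,
    (∀ t i, 0 ≤ u t i) ∧ (∀ t j, 0 ≤ v t j) ∧ ∀ i j, A i j = ∑ t, u t i * v t j} := by
  apply Nat.sInf_mem
  classical
  set e := (Fintype.equivFin (α × β))
  refine ⟨Fintype.card (α × β), fun t i => if i = (e.symm t).1 then A (e.symm t).1 (e.symm t).2 else 0,
    fun t j => if j = (e.symm t).2 then 1 else 0, ?_, ?_, ?_⟩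
  · intro t i; dsimp only; split
    exacts [hA _ _, le_rfl]
  · intro t j; dsimp only; split <;> norm_num
  · intro i j
    rw [← Equiv.sum_comp e]
    simp only [Equiv.symm_apply_apply]
    rw [Fintype.sum_prod_type]
    rw [Finset.sum_eq_single i]
    · rw [Finset.sum_eq_single j]
      · simp
      · intro b _ hb; simp [Ne.symm hb]
      · simp
    · intro b _ hb; simp [Ne.symm hb]
    · simp

theorem stmt_0 {m1 m2 n1 n2 : ℕ}
    (B : Matrix (Fin m1) (Fin n1) ℝ) (C : Matrix (Fin m1) (Fin n2) ℝ)
    (D : Matrix (Fin m2) (Fin n2) ℝ)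
    (hB : ∀ i j, 0 ≤ B i j) (hC : ∀ i j, 0 ≤ C i j) (hD : ∀ i j, 0 ≤ D i j) :
    nnRank B + nnRank D ≤ nnRank (Matrix.fromBlocks B C 0 D) := by
  classical
  set A := Matrix.fromBlocks B C 0 D with hAdef
  have hApos : ∀ i j, 0 ≤ A i j := by
    rintro (i | i) (j | j) <;> simp [hAdef, Matrix.fromBlocks, hB, hC, hD]
  set r := nnRank A with hr
  obtain ⟨u, v, hu, hv, hA⟩ := nnRank_mem A hApos
  set P : Fin r → Prop := fun t => ∃ j : Fin n1, 0 < v t (Sum.inl j) with hP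
  -- for t with P t, u t (Sum.inr i) = 0
  have key : ∀ t : Fin r, P t → ∀ i : Fin m2, u t (Sum.inr i) = 0 := by
    intro t ⟨j0, hj0⟩ i
    have h0 : (0:ℝ) = ∑ s, u s (Sum.inr i) * v s (Sum.inl j0) := by
      have := hA (Sum.inr i) (Sum.inl j0)
      simpa [hAdef, Matrix.fromBlocks] using this
    have hz : u t (Sum.inr i) * v t (Sum.inl j0) = 0 := by
      have := (Finset.sum_eq_zero_iff_of_nonneg
        (fun s _ => mul_nonneg (hu s _) (hv s _))).mp h0.symm t (Finset.mem_univ t)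
      exact this
    rcases mul_eq_zero.mp hz with h | h
    · exact h
    · exact absurd h (ne_of_gt hj0)
  -- for t with ¬ P t, v t (Sum.inl j) = 0
  have key2 : ∀ t : Fin r, ¬ P t → ∀ j : Fin n1, v t (Sum.inl j) = 0 := by
    intro t ht j
    have := hv t (Sum.inl j)
    rcases lt_or_eq_of_le this with h | h
    · exact absurd ⟨j, h⟩ ht
    · exact h.symm
  have hBle : nnRank B ≤ Fintype.card {t : Fin r // P t} := by
    apply nnRank_le_card B (fun t i => u t.1 (Sum.inl i)) (fun t j => v t.1 (Sum.inl j))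
      (fun t i => hu _ _) (fun t j => hv _ _)
    intro i j
    have h := hA (Sum.inl i) (Sum.inl j)
    simp only [hAdef, Matrix.fromBlocks, Sum.elim_inl] at h
    rw [show B i j = A (Sum.inl i) (Sum.inl j) by simp [hAdef, Matrix.fromBlocks], hA]
    rw [← Finset.sum_filter_add_sum_filter_not Finset.univ P
      (fun t => u t (Sum.inl i) * v t (Sum.inl j))]
    have h2 : ∑ t ∈ Finset.univ.filter (fun t => ¬ P t),
        u t (Sum.inl i) * v t (Sum.inl j) = 0 := by
      apply Finset.sum_eq_zero
      intro t ht
      rw [key2 t (Finset.mem_filter.mp ht).2 j, mul_zero]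
    rw [h2, add_zero]
    rw [Finset.sum_subtype (p := P) (Finset.univ.filter P)
      (fun t => by simp) (fun t => u t (Sum.inl i) * v t (Sum.inl j))]
  have hDle : nnRank D ≤ Fintype.card {t : Fin r // ¬ P t} := by
    apply nnRank_le_card D (fun t i => u t.1 (Sum.inr i)) (fun t j => v t.1 (Sum.inr j))
      (fun t i => hu _ _) (fun t j => hv _ _)
    intro i j
    rw [show D i j = A (Sum.inr i) (Sum.inr j) by simp [hAdef, Matrix.fromBlocks], hA]
    rw [← Finset.sum_filter_add_sum_filter_not Finset.univ (fun t => ¬ P t)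
      (fun t => u t (Sum.inr i) * v t (Sum.inr j))]
    have h2 : ∑ t ∈ Finset.univ.filter (fun t => ¬ ¬ P t),
        u t (Sum.inr i) * v t (Sum.inr j) = 0 := by
      apply Finset.sum_eq_zero
      intro t ht
      rw [key t (not_not.mp (Finset.mem_filter.mp ht).2) i, zero_mul]
    rw [h2, add_zero]
    rw [Finset.sum_subtype (p := fun t => ¬ P t) (Finset.univ.filter (fun t => ¬ P t))
      (fun t => by simp) (fun t => u t (Sum.inr i) * v t (Sum.inr j))]
  calc nnRank B + nnRank D ≤ Fintype.card {t : Fin r // P t} + Fintype.card {t : Fin r // ¬ P t} :=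
        add_le_add hBle hDle
    _ = r := by
        rw [Fintype.card_subtype_compl, Fintype.card_fin]
        have := Fintype.card_subtype_le P
        rw [Fintype.card_fin] at this
        omega
end

section
/- Let A be a nonnegative matrix in which the (i,j) entry is positive and all other entries of the j-th column are zero. Then the nonnegative rank of A equals one plus the nonnegative rank of the matrix obtained from A by deleting the i-th row and the j-th column. -/
lemma nnSet_nonempty {α β : Type} [Fintype α] [Fintype β] (A : Matrix α β ℝ)
    (hA : ∀ i j, 0 ≤ A i j) :
    {r : ℕ | ∃ u : Fin r → α → ℝ, ∃ v : Fin r → β → ℝ,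
      (∀ t i, 0 ≤ u t i) ∧ (∀ t j, 0 ≤ v t j) ∧ ∀ i j, A i j = ∑ t, u t i * v t j}.Nonempty := by
  classical
  refine ⟨Fintype.card (α × β), fun t i' => if ((Fintype.equivFin (α × β)).symm t).1 = i'
      then A (((Fintype.equivFin (α × β)).symm t).1) (((Fintype.equivFin (α × β)).symm t).2) else 0,
    fun t j' => if ((Fintype.equivFin (α × β)).symm t).2 = j' then 1 else 0, ?_, ?_, ?_⟩
  · intro t i'; dsimp only; split_ifs with h; exacts [hA _ _, le_refl 0]
  · intro t j'; dsimp only; split_ifs with h; exacts [zero_le_one, le_refl 0]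
  · intro i j
    dsimp only
    refine ((Fintype.sum_equiv ((Fintype.equivFin (α × β)).symm) _
      (fun p : α × β => (if p.1 = i then A p.1 p.2 else 0) * (if p.2 = j then 1 else 0))
      (fun t => rfl)).trans ?_).symm
    have key : ∀ p : α × β, (if p.1 = i then A p.1 p.2 else 0) * (if p.2 = j then 1 else 0)
        = if p = (i, j) then A i j else 0 := by
      rintro ⟨a, b⟩
      simp only [Prod.mk.injEq]
      split_ifs with h1 h2 h3 h3 h2 <;> simp_all
    rw [Finset.sum_congr rfl fun p _ => key p, Finset.sum_ite_eq' Finset.univ (i, j)]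
    simp

theorem stmt_3 {m n : ℕ} (A : Matrix (Fin (m + 1)) (Fin (n + 1)) ℝ)
    (hA : ∀ i j, 0 ≤ A i j) (i : Fin (m + 1)) (j : Fin (n + 1))
    (hpos : 0 < A i j) (hcol : ∀ i' : Fin (m + 1), i' ≠ i → A i' j = 0) :
    nnRank A = 1 + nnRank (A.submatrix i.succAbove j.succAbove) := by
  classical
  set B := A.submatrix i.succAbove j.succAbove with hB
  have hBnn : ∀ k l, 0 ≤ B k l := fun k l => hA _ _
  have hneA := nnSet_nonempty A hA
  have hneB := nnSet_nonempty B hBnn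
  apply le_antisymm
  · -- nnRank A ≤ 1 + nnRank B
    have key : ∀ s : ℕ, s ∈ {r : ℕ | ∃ u : Fin r → Fin m → ℝ, ∃ v : Fin r → Fin n → ℝ,
        (∀ t k, 0 ≤ u t k) ∧ (∀ t l, 0 ≤ v t l) ∧ ∀ k l, B k l = ∑ t, u t k * v t l} →
        nnRank A ≤ 1 + s := by
      rintro s ⟨u, v, hu, hv, huv⟩
      have hmem : s + 1 ∈ {r : ℕ | ∃ u : Fin r → Fin (m + 1) → ℝ,
          ∃ v : Fin r → Fin (n + 1) → ℝ, (∀ t i', 0 ≤ u t i') ∧ (∀ t j', 0 ≤ v t j') ∧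
          ∀ i' j', A i' j' = ∑ t, u t i' * v t j'} := by
        refine ⟨Fin.cases (fun i' => A i' j) (fun t => Function.extend i.succAbove (u t) 0),
          Fin.cases (fun j' => A i j' / A i j) (fun t => Function.extend j.succAbove (v t) 0),
          ?_, ?_, ?_⟩
        · intro t i'
          refine Fin.cases ?_ ?_ t
          · exact hA i' j
          · intro t'
            simp only [Fin.cases_succ]
            rw [Function.extend_def]
            split_ifs with h
            · exact hu _ _
            · exact le_refl 0
        · intro t j'
          refine Fin.cases ?_ ?_ t
          · exact div_nonneg (hA i j') hpos.le
          · intro t'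
            simp only [Fin.cases_succ]
            rw [Function.extend_def]
            split_ifs with h
            · exact hv _ _
            · exact le_refl 0
        · intro i' j'
          rw [Fin.sum_univ_succ]
          simp only [Fin.cases_zero, Fin.cases_succ]
          rcases eq_or_ne i' i with h | hi'
          · subst h
            have hz : ∀ t : Fin s, Function.extend i'.succAbove (u t) 0 i' = 0 := by
              intro t
              rw [Function.extend_apply']
              · rfl
              · rintro ⟨k, hk⟩; exact Fin.succAbove_ne i' k hk
            simp only [hz, zero_mul, Finset.sum_const_zero, add_zero]
            field_simp
          · obtain ⟨k, rfl⟩ := Fin.exists_succAbove_eq (Ne.symm hi').symm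
            have h0 : A (i.succAbove k) j = 0 := hcol _ (Fin.succAbove_ne i k)
            rw [h0, zero_mul, zero_add]
            have hux : ∀ t : Fin s, Function.extend i.succAbove (u t) 0 (i.succAbove k) = u t k :=
              fun t => Function.Injective.extend_apply (Fin.succAbove_right_injective) _ _ _
            simp only [hux]
            rcases eq_or_ne j' j with h | hj'
            · subst h
              have hz : ∀ t : Fin s, Function.extend j'.succAbove (v t) 0 j' = 0 := by
                intro t
                rw [Function.extend_apply']
                · rfl
                · rintro ⟨l, hl⟩; exact Fin.succAbove_ne j' l hl
              simp only [hz, mul_zero, Finset.sum_const_zero]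
              exact hcol _ (Fin.succAbove_ne i k)
            · obtain ⟨l, rfl⟩ := Fin.exists_succAbove_eq (Ne.symm hj').symm
              have hvx : ∀ t : Fin s,
                  Function.extend j.succAbove (v t) 0 (j.succAbove l) = v t l :=
                fun t => Function.Injective.extend_apply (Fin.succAbove_right_injective) _ _ _
              simp only [hvx]
              exact huv k l
      have h2 : nnRank A ≤ s + 1 := Nat.sInf_le hmem
      omega
    exact key _ (Nat.sInf_mem hneB)
  · -- 1 + nnRank B ≤ nnRank A
    have key : ∀ r : ℕ, r ∈ {r : ℕ | ∃ u : Fin r → Fin (m + 1) → ℝ,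
        ∃ v : Fin r → Fin (n + 1) → ℝ, (∀ t i', 0 ≤ u t i') ∧ (∀ t j', 0 ≤ v t j') ∧
        ∀ i' j', A i' j' = ∑ t, u t i' * v t j'} → 1 + nnRank B ≤ r := by
      rintro r ⟨u, v, hu, hv, huv⟩
      rcases r with _ | s
      · exfalso
        have := huv i j
        simp only [Finset.univ_eq_empty, Finset.sum_empty] at this
        rw [this] at hpos; exact lt_irrefl 0 hpos
      have hsum := huv i j
      have ht0 : ∃ t₀ : Fin (s + 1), u t₀ i * v t₀ j ≠ 0 := by
        by_contra h
        push_neg at h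
        rw [Finset.sum_eq_zero (fun t _ => h t)] at hsum
        rw [hsum] at hpos; exact lt_irrefl 0 hpos
      obtain ⟨t₀, ht₀⟩ := ht0
      have hvtj : v t₀ j ≠ 0 := fun h => ht₀ (by rw [h, mul_zero])
      have hurow : ∀ i' : Fin (m + 1), i' ≠ i → u t₀ i' = 0 := by
        intro i' hi'
        have h0 : ∑ t, u t i' * v t j = 0 := (hcol i' hi') ▸ (huv i' j).symm
        have := (Finset.sum_eq_zero_iff_of_nonneg
          (fun t _ => mul_nonneg (hu t i') (hv t j))).mp h0 t₀ (Finset.mem_univ t₀)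
        rcases mul_eq_zero.mp this with h | h
        · exact h
        · exact absurd h hvtj
      have hmem : s ∈ {r : ℕ | ∃ u : Fin r → Fin m → ℝ, ∃ v : Fin r → Fin n → ℝ,
          (∀ t k, 0 ≤ u t k) ∧ (∀ t l, 0 ≤ v t l) ∧ ∀ k l, B k l = ∑ t, u t k * v t l} := by
        refine ⟨fun t k => u (t₀.succAbove t) (i.succAbove k),
          fun t l => v (t₀.succAbove t) (j.succAbove l), fun t k => hu _ _, fun t l => hv _ _, ?_⟩
        intro k l
        have h1 := huv (i.succAbove k) (j.succAbove l)
        rw [Fin.sum_univ_succAbove _ t₀, hurow _ (Fin.succAbove_ne i k), zero_mul, zero_add] at h1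
        exact h1
      have : nnRank B ≤ s := Nat.sInf_le hmem
      omega
    exact key _ (Nat.sInf_mem hneA)
end

section
/- Let A be an n x n nonnegative real matrix whose subdiagonal entries A_{i+1,i} (for i = 1,...,n-1) are all nonzero and which is tridiagonal (A_{ij} = 0 whenever |i-j| > 1). Then the nonnegative rank of A is either n-1 or n. -/
theorem stmt_4 {n : ℕ} (A : Matrix (Fin n) (Fin n) ℝ)
    (hA : ∀ i j, 0 ≤ A i j)
    (hsub : ∀ i j : Fin n, (i : ℕ) = (j : ℕ) + 1 → A i j ≠ 0)
    (htri : ∀ i j : Fin n, 1 < |(i : ℤ) - (j : ℤ)| → A i j = 0) :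
    nnRank A = n - 1 ∨ nnRank A = n := by
  have hub : nnRank A ≤ n := by
    apply Nat.sInf_le
    refine ⟨fun t i => if (t : ℕ) = (i : ℕ) then 1 else 0, fun t j => A t j,
      fun t i => by positivity, fun t j => hA _ _, fun i j => ?_⟩
    rw [Finset.sum_eq_single i]
    · simp [Fin.val_eq_val]
    · intro b _ hb
      simp [Fin.val_eq_val, hb]
    · simp
  -- lower bound: every r in the set is ≥ n - 1
  have hrank : n - 1 ≤ A.rank := by
    rcases Nat.eq_zero_or_pos n with hn | hn
    · simp [hn]
    have hle : n - 1 ≤ n := Nat.sub_le _ _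
    set f : Fin (n - 1) → Fin n := fun i => ⟨(i : ℕ) + 1, by omega⟩ with hf
    set g : Fin (n - 1) → Fin n := fun j => ⟨(j : ℕ), by omega⟩ with hg
    set B : Matrix (Fin (n - 1)) (Fin (n - 1)) ℝ := A.submatrix f g with hB
    have hBtri : B.BlockTriangular id := by
      intro i j hij
      apply htri
      have hji : (j : ℕ) < (i : ℕ) := hij
      refine lt_of_lt_of_le ?_ (le_abs_self _)
      simp only [hB, hf, hg, Matrix.submatrix_apply]
      push_cast
      omega
    have hdet : B.det ≠ 0 := by
      rw [Matrix.det_of_upperTriangular hBtri]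
      apply Finset.prod_ne_zero_iff.mpr
      intro i _
      exact hsub _ _ rfl
    have hBrank : B.rank = n - 1 := by
      rw [Matrix.rank_of_isUnit B ((Matrix.isUnit_iff_isUnit_det B).mpr hdet.isUnit)]
      simp
    have h1 : B.rank ≤ A.rank := by
      set E : Matrix (Fin (n-1)) (Fin n) ℝ :=
        Matrix.of fun i k => if k = f i then 1 else 0 with hE
      set F : Matrix (Fin n) (Fin (n-1)) ℝ :=
        Matrix.of fun l j => if l = g j then 1 else 0 with hF
      have hEAF : E * A * F = B := by
        ext i j
        simp only [hE, hF, hB, Matrix.mul_apply, Matrix.of_apply, Matrix.submatrix_apply,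
          ite_mul, one_mul, zero_mul, mul_ite, mul_one, mul_zero]
        rw [Finset.sum_ite_eq' Finset.univ (g j), if_pos (Finset.mem_univ _),
          Finset.sum_ite_eq' Finset.univ (f i), if_pos (Finset.mem_univ _)]
      calc B.rank = (E * A * F).rank := by rw [hEAF]
        _ ≤ (E * A).rank := Matrix.rank_mul_le_left _ _
        _ ≤ A.rank := Matrix.rank_mul_le_right _ _
    rw [← hBrank]
    exact h1
  have hlb : n - 1 ≤ nnRank A := by
    apply le_csInf
    · exact ⟨n, by
        refine ⟨fun t i => if (t : ℕ) = (i : ℕ) then 1 else 0, fun t j => A t j,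
          fun t i => by positivity, fun t j => hA _ _, fun i j => ?_⟩
        rw [Finset.sum_eq_single i]
        · simp [Fin.val_eq_val]
        · intro b _ hb
          simp [Fin.val_eq_val, hb]
        · simp⟩
    · rintro r ⟨u, v, hu, hv, huv⟩
      have hfac : A = (Matrix.of fun i t => u t i) * (Matrix.of fun t j => v t j) := by
        ext i j
        rw [Matrix.mul_apply]
        exact huv i j
      calc n - 1 ≤ A.rank := hrank
        _ ≤ (Matrix.of fun (t : Fin r) j => v t j).rank := by
            rw [hfac]; exact Matrix.rank_mul_le_right _ _
        _ ≤ r := le_trans (Matrix.rank_le_card_height _) (by simp)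
  omega
end

section
/- Let M be an n x n k-band nonnegative matrix (M_{ij} = 0 whenever |i-j| > k), and let Q be a nonnegative rank-one matrix with Q \leq M entrywise. If (i,j) lies in the support of Q, then every (i',j') in the support of Q satisfies |i'-i| \leq 2k and |j'-j| \leq 2k. -/
theorem stmt_7 {n k : ℕ} (M Q : Matrix (Fin n) (Fin n) ℝ)
    (hM : ∀ i j, 0 ≤ M i j)
    (hband : ∀ i j : Fin n, (k : ℤ) < |(i : ℤ) - (j : ℤ)| → M i j = 0)
    (u v : Fin n → ℝ) (hu : ∀ i, 0 ≤ u i) (hv : ∀ j, 0 ≤ v j)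
    (hQ : ∀ i j, Q i j = u i * v j)
    (hle : ∀ i j, Q i j ≤ M i j)
    (i j : Fin n) (hij : Q i j ≠ 0) :
    ∀ i' j' : Fin n, Q i' j' ≠ 0 →
      |(i' : ℤ) - (i : ℤ)| ≤ 2 * k ∧ |(j' : ℤ) - (j : ℤ)| ≤ 2 * k := by
  intro i' j' hij'
  -- positivity of components
  have hui : 0 < u i := lt_of_le_of_ne (hu i) (fun h => hij (by simp [hQ, ← h]))
  have hvj : 0 < v j := lt_of_le_of_ne (hv j) (fun h => hij (by simp [hQ, ← h]))
  have hui' : 0 < u i' := lt_of_le_of_ne (hu i') (fun h => hij' (by simp [hQ, ← h]))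
  have hvj' : 0 < v j' := lt_of_le_of_ne (hv j') (fun h => hij' (by simp [hQ, ← h]))
  have band : ∀ a b : Fin n, 0 < u a → 0 < v b → |(a : ℤ) - (b : ℤ)| ≤ k := by
    intro a b ha hb
    by_contra h
    push_neg at h
    have hM0 : M a b = 0 := hband a b h
    have : Q a b ≤ 0 := hM0 ▸ hle a b
    rw [hQ] at this
    exact absurd this (not_le.mpr (mul_pos ha hb))
  have h1 := band i j' hui hvj'
  have h2 := band i' j' hui' hvj'
  have h3 := band i' j hui' hvj
  have h4 := band i j hui hvj
  constructor
  · calc |(i' : ℤ) - i| ≤ |(i' : ℤ) - j'| + |(j' : ℤ) - i| := abs_sub_le _ _ _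
      _ ≤ k + k := by
          have : |(j' : ℤ) - i| = |(i : ℤ) - j'| := abs_sub_comm _ _
          omega
      _ = 2 * k := by ring
  · calc |(j' : ℤ) - j| ≤ |(j' : ℤ) - i'| + |(i' : ℤ) - j| := abs_sub_le _ _ _
      _ ≤ k + k := by
          have : |(j' : ℤ) - i'| = |(i' : ℤ) - j'| := abs_sub_comm _ _
          omega
      _ = 2 * k := by ring
end

section
/- Let A be an n x n nonnegative matrix with all subdiagonal and superdiagonal entries nonzero, all entries A_{ij} with |i-j| > 1 equal to zero, and A_{11} > 0. If A = A_1 + ... + A_{n-1} is a decomposition into nonnegative rank-one matrices, then at most one A_t has a nonzero entry in the first column. -/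
theorem stmt_12 {n : ℕ} (hn : 0 < n) (A : Matrix (Fin n) (Fin n) ℝ)
    (hA : ∀ i j, 0 ≤ A i j)
    (htri : ∀ i j : Fin n, 1 < |(i : ℤ) - (j : ℤ)| → A i j = 0)
    (hsub : ∀ i j : Fin n, (i : ℕ) = (j : ℕ) + 1 → 0 < A i j)
    (hsup : ∀ i j : Fin n, (j : ℕ) = (i : ℕ) + 1 → 0 < A i j)
    (h11 : 0 < A ⟨0, hn⟩ ⟨0, hn⟩)
    (M : Fin (n - 1) → Matrix (Fin n) (Fin n) ℝ)
    (hrank1 : ∀ t, ∃ u v : Fin n → ℝ,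
      (∀ i, 0 ≤ u i) ∧ (∀ j, 0 ≤ v j) ∧ ∀ i j, M t i j = u i * v j)
    (hsum : A = ∑ t, M t) :
    ∀ t s : Fin (n - 1), (∃ i, M t i ⟨0, hn⟩ ≠ 0) → (∃ i, M s i ⟨0, hn⟩ ≠ 0) → t = s := by
  intro t s ht hs
  choose u v hu hv hM using hrank1
  have hnn : ∀ r i j, 0 ≤ M r i j := fun r i j => by
    rw [hM]; exact mul_nonneg (hu r i) (hv r j)
  have hsum' : ∀ i j, A i j = ∑ r, M r i j := by
    intro i j; rw [hsum]; simp [Matrix.sum_apply]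
  have hMle : ∀ r i j, M r i j ≤ A i j := by
    intro r i j; rw [hsum' i j]
    exact Finset.single_le_sum (fun r _ => hnn r i j) (Finset.mem_univ r)
  have hband : ∀ r (i j : Fin n), M r i j ≠ 0 → |(i:ℤ) - (j:ℤ)| ≤ 1 := by
    intro r i j h
    by_contra hb
    push_neg at hb
    exact h (le_antisymm ((htri i j hb) ▸ hMle r i j) (hnn r i j))
  have huv : ∀ r i j, u r i ≠ 0 → v r j ≠ 0 → M r i j ≠ 0 := by
    intro r i j h1 h2; rw [hM]; exact mul_ne_zero h1 h2
  have hlt1 : ∀ i : Fin (n-1), (i:ℕ) < n := fun i => by have := i.isLt; omega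
  have hlt2 : ∀ i : Fin (n-1), (i:ℕ)+1 < n := fun i => by have := i.isLt; omega
  have hcov : ∀ i : Fin (n-1), ∃ r, M r ⟨i+1, hlt2 i⟩ ⟨i, hlt1 i⟩ ≠ 0 := by
    intro i
    by_contra h
    push_neg at h
    have hApos := hsub ⟨i+1, hlt2 i⟩ ⟨i, hlt1 i⟩ rfl
    rw [hsum' _ _] at hApos
    simp only [h, Finset.sum_const_zero] at hApos
    exact lt_irrefl _ hApos
  choose g hg using hcov
  have hone : ∀ r, ∀ i j : Fin (n-1), M r ⟨i+1, hlt2 i⟩ ⟨i, hlt1 i⟩ ≠ 0 →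
      M r ⟨j+1, hlt2 j⟩ ⟨j, hlt1 j⟩ ≠ 0 → i = j := by
    intro r i j h1 h2
    rw [hM] at h1 h2
    have hui := left_ne_zero_of_mul h1
    have hvi := right_ne_zero_of_mul h1
    have huj := left_ne_zero_of_mul h2
    have hvj := right_ne_zero_of_mul h2
    have b1 := hband r ⟨i+1, hlt2 i⟩ ⟨j, hlt1 j⟩ (huv r _ _ hui hvj)
    have b2 := hband r ⟨j+1, hlt2 j⟩ ⟨i, hlt1 i⟩ (huv r _ _ huj hvi)
    rw [abs_le] at b1 b2
    apply Fin.ext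
    simp only [Fin.val_mk] at b1 b2
    omega
  have ginj : Function.Injective g := by
    intro i j hij
    exact hone (g i) i j (hg i) (by rw [hij]; exact hg j)
  have gsurj := Finite.surjective_of_injective ginj
  obtain ⟨it, hit⟩ := ht
  obtain ⟨is', his⟩ := hs
  have hvt0 : v t ⟨0, hn⟩ ≠ 0 := by rw [hM] at hit; exact right_ne_zero_of_mul hit
  have hvs0 : v s ⟨0, hn⟩ ≠ 0 := by rw [hM] at his; exact right_ne_zero_of_mul his
  obtain ⟨jt, hjt⟩ := gsurj t
  obtain ⟨js, hjs⟩ := gsurj s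
  have h1 := hg jt
  rw [hjt, hM] at h1
  have h2 := hg js
  rw [hjs, hM] at h2
  have hut := left_ne_zero_of_mul h1
  have hus := left_ne_zero_of_mul h2
  have bt := hband t ⟨jt+1, hlt2 jt⟩ ⟨0, hn⟩ (huv t _ _ hut hvt0)
  have bs := hband s ⟨js+1, hlt2 js⟩ ⟨0, hn⟩ (huv s _ _ hus hvs0)
  rw [abs_le] at bt bs
  simp only [Fin.val_mk] at bt bs
  have : jt = js := by apply Fin.ext; omega
  rw [← hjt, ← hjs, this]
end

section
/- Let A = [[B, C], [0, D]] be a nonnegative block matrix. Then rank_+(A) \leq rank_+(B|C) + rank_+(D), where (B|C) is the horizontal concatenation of B and C. -/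
open Matrix

section NonnegFactorization

variable {α α' β β' : Type}

def HasNonnegFactorization (A : Matrix α β ℝ) (r : ℕ) : Prop :=
  ∃ u : Fin r → α → ℝ, ∃ v : Fin r → β → ℝ,
    (∀ t i, 0 ≤ u t i) ∧ (∀ t j, 0 ≤ v t j) ∧ ∀ i j, A i j = ∑ t, u t i * v t j

theorem nnRank_le_of_hasNonnegFactorization [Fintype α] [Fintype β] {A : Matrix α β ℝ} {r : ℕ}
    (h : HasNonnegFactorization A r) : nnRank A ≤ r :=
  Nat.sInf_le h

/-- The trivial factorization `A = 1 * A`. -/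
theorem hasNonnegFactorization_card [Fintype α] {A : Matrix α β ℝ} (hA : ∀ i j, 0 ≤ A i j) :
    HasNonnegFactorization A (Fintype.card α) := by
  classical
  let e := Fintype.equivFin α
  refine ⟨fun t i => if i = e.symm t then 1 else 0, fun t j => A (e.symm t) j,
    fun t i => by positivity, fun t j => hA _ j, fun i j => ?_⟩
  dsimp only
  rw [e.symm.sum_comp (fun k => (if i = k then 1 else 0) * A k j)]
  simp

theorem hasNonnegFactorization_nnRank [Fintype α] [Fintype β] {A : Matrix α β ℝ}
    (hA : ∀ i j, 0 ≤ A i j) :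
    HasNonnegFactorization A (nnRank A) :=
  Nat.sInf_mem (s := {r | HasNonnegFactorization A r}) ⟨_, hasNonnegFactorization_card hA⟩

theorem HasNonnegFactorization.fromRows {A₁ : Matrix α β ℝ} {A₂ : Matrix α' β ℝ} {r s : ℕ}
    (h₁ : HasNonnegFactorization A₁ r) (h₂ : HasNonnegFactorization A₂ s) :
    HasNonnegFactorization (fromRows A₁ A₂) (r + s) := by
  obtain ⟨u₁, v₁, hu₁, hv₁, hA₁⟩ := h₁
  obtain ⟨u₂, v₂, hu₂, hv₂, hA₂⟩ := h₂
  refine ⟨Fin.append (fun t => Sum.elim (u₁ t) 0) (fun t => Sum.elim 0 (u₂ t)),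
    Fin.append v₁ v₂, ?_, ?_, ?_⟩
  · refine Fin.addCases (fun t => ?_) (fun t => ?_) <;> rintro (i | i) <;> simp [hu₁, hu₂]
  · refine Fin.addCases (fun t => ?_) (fun t => ?_) <;> simp [hv₁, hv₂]
  · rintro (i | i) j <;> simp [Fin.sum_univ_add, hA₁, hA₂]

theorem HasNonnegFactorization.fromCols_zero {D : Matrix α β' ℝ} {s : ℕ}
    (h : HasNonnegFactorization D s) :
    HasNonnegFactorization (fromCols (0 : Matrix α β ℝ) D) s := by
  obtain ⟨u, v, hu, hv, hD⟩ := h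
  refine ⟨u, fun t => Sum.elim 0 (v t), hu, ?_, ?_⟩
  · rintro t (j | j) <;> simp [hv]
  · rintro i (j | j) <;> simp [hD]

end NonnegFactorization

theorem stmt_18 {m1 m2 n1 n2 : ℕ}
    (B : Matrix (Fin m1) (Fin n1) ℝ) (C : Matrix (Fin m1) (Fin n2) ℝ)
    (D : Matrix (Fin m2) (Fin n2) ℝ)
    (hB : ∀ i j, 0 ≤ B i j) (hC : ∀ i j, 0 ≤ C i j) (hD : ∀ i j, 0 ≤ D i j) :
    nnRank (Matrix.fromBlocks B C 0 D) ≤ nnRank (Matrix.fromCols B C) + nnRank D := by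
  have hBC : ∀ i j, 0 ≤ fromCols B C i j := by rintro i (j | j) <;> simp [hB, hC]
  rw [← fromRows_fromCols_eq_fromBlocks]
  exact nnRank_le_of_hasNonnegFactorization <|
    (hasNonnegFactorization_nnRank hBC).fromRows (hasNonnegFactorization_nnRank hD).fromCols_zero
end

section
/- Let A be an n x n (n \geq 2) nonnegative tridiagonal matrix with all subdiagonal and superdiagonal entries positive and A_{11} > 0. Then rank_+(A) = n-1 if and only if there exists a nonnegative rank-one matrix R whose first row equals the first row of A and whose first column equals the first column of A, such that A - R is entrywise nonnegative and rank_+(A - R) = n - 2. -/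
open Matrix Finset

/-- If `A` agrees on a `k×k` submatrix with a triangular matrix with nonzero diagonal,
then any decomposition of `A` as a sum over `s` of rank-one matrices has `k ≤ s.card`. -/
lemma count_le {n k r : ℕ} (s : Finset (Fin r)) (A : Matrix (Fin n) (Fin n) ℝ)
    (u v : Fin r → Fin n → ℝ)
    (hA : ∀ i j, A i j = ∑ t ∈ s, u t i * v t j)
    (ri ci : Fin k → Fin n)
    (htri : ∀ a b : Fin k, a < b → A (ri a) (ci b) = 0)
    (hdiag : ∀ a, A (ri a) (ci a) ≠ 0) :
    k ≤ s.card := by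
  by_contra hlt
  push_neg at hlt
  set q := s.card with hq
  let e : Fin q ≃ {x // x ∈ s} := s.equivFin.symm
  set U : Matrix (Fin k) (Fin q) ℝ := fun a t => u (e t) (ri a) with hU
  set V : Matrix (Fin q) (Fin k) ℝ := fun t b => v (e t) (ci b) with hV
  set B : Matrix (Fin k) (Fin k) ℝ := fun a b => A (ri a) (ci b) with hB
  have hBUV : B = U * V := by
    ext a b
    rw [Matrix.mul_apply, hB]
    show A (ri a) (ci b) = _
    rw [hA]
    rw [← Finset.sum_coe_sort s (fun t => u t (ri a) * v t (ci b))]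
    exact (Equiv.sum_comp e (fun t => u (t : Fin r) (ri a) * v (t : Fin r) (ci b))).symm
  have hnotinj : ¬ Function.Injective (Matrix.mulVecLin V) := by
    intro hinj
    have := LinearMap.finrank_le_finrank_of_injective hinj
    rw [Module.finrank_fin_fun, Module.finrank_fin_fun] at this
    omega
  rw [Function.not_injective_iff] at hnotinj
  obtain ⟨x, y, hxy, hne⟩ := hnotinj
  have hVx : V *ᵥ (x - y) = 0 := by
    have : Matrix.mulVecLin V (x - y) = 0 := by
      rw [map_sub, hxy, sub_self]
    simpa [Matrix.mulVecLin_apply] using this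
  have hBx : B *ᵥ (x - y) = 0 := by
    rw [hBUV, ← Matrix.mulVec_mulVec, hVx, Matrix.mulVec_zero]
  have hdet : IsUnit B.det := by
    have htriB : B.BlockTriangular ⇑OrderDual.toDual := by
      intro a b hab
      exact htri a b hab
    rw [Matrix.det_of_lowerTriangular B htriB]
    rw [isUnit_iff_ne_zero]
    exact Finset.prod_ne_zero_iff.mpr (fun a _ => hdiag a)
  have : x - y = 0 := by
    have h1 : B⁻¹ *ᵥ (B *ᵥ (x - y)) = x - y := by
      rw [Matrix.mulVec_mulVec, Matrix.nonsing_inv_mul B hdet, Matrix.one_mulVec]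
    rw [hBx, Matrix.mulVec_zero] at h1
    exact h1.symm
  exact hne (sub_eq_zero.mp this)

lemma count_le' {n k r : ℕ} (s : Finset (Fin r)) (A : Matrix (Fin n) (Fin n) ℝ)
    (u v : Fin r → Fin n → ℝ)
    (hA : ∀ i j, A i j = ∑ t ∈ s, u t i * v t j)
    (ri ci : Fin k → Fin n)
    (htri : ∀ a b : Fin k, b < a → A (ri a) (ci b) = 0)
    (hdiag : ∀ a, A (ri a) (ci a) ≠ 0) :
    k ≤ s.card := by
  refine count_le s (fun i j => A j i) v u (fun i j => ?_) ci ri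
    (fun a b hab => htri b a hab) (fun a => hdiag a)
  show A j i = _
  rw [hA j i]
  exact Finset.sum_congr rfl (fun t _ => mul_comm _ _)

/-- Every entrywise-nonnegative matrix has some nonnegative decomposition. -/
lemma decomp_nonempty {n : ℕ} (A : Matrix (Fin n) (Fin n) ℝ) (hA : ∀ i j, 0 ≤ A i j) :
    {r : ℕ | ∃ u : Fin r → Fin n → ℝ, ∃ v : Fin r → Fin n → ℝ,
      (∀ t i, 0 ≤ u t i) ∧ (∀ t j, 0 ≤ v t j) ∧ ∀ i j, A i j = ∑ t, u t i * v t j}.Nonempty := by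
  refine ⟨n * n, fun t i => if i = (finProdFinEquiv.symm t).1 then 1 else 0,
    fun t j => if j = (finProdFinEquiv.symm t).2
      then A (finProdFinEquiv.symm t).1 (finProdFinEquiv.symm t).2 else 0, ?_, ?_, ?_⟩
  · intro t i; dsimp only; split <;> norm_num
  · intro t j; dsimp only; split
    · exact hA _ _
    · exact le_refl 0
  · intro i j
    dsimp only
    rw [← Equiv.sum_comp finProdFinEquiv
      (fun t => (if i = (finProdFinEquiv.symm t).1 then (1:ℝ) else 0) *
        (if j = (finProdFinEquiv.symm t).2 then A (finProdFinEquiv.symm t).1 (finProdFinEquiv.symm t).2 else 0))]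
    simp only [Equiv.symm_apply_apply]
    rw [Fintype.sum_prod_type]
    simp [Finset.sum_ite_eq, eq_comm]

lemma nnRank_spec {n : ℕ} (A : Matrix (Fin n) (Fin n) ℝ) (h : ∀ i j, 0 ≤ A i j) :
    ∃ u : Fin (nnRank A) → Fin n → ℝ, ∃ v : Fin (nnRank A) → Fin n → ℝ,
      (∀ t i, 0 ≤ u t i) ∧ (∀ t j, 0 ≤ v t j) ∧ ∀ i j, A i j = ∑ t, u t i * v t j :=
  Nat.sInf_mem (decomp_nonempty A h)

lemma nnRank_le {n r : ℕ} (A : Matrix (Fin n) (Fin n) ℝ)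
    (u : Fin r → Fin n → ℝ) (v : Fin r → Fin n → ℝ)
    (hu : ∀ t i, 0 ≤ u t i) (hv : ∀ t j, 0 ≤ v t j)
    (h : ∀ i j, A i j = ∑ t, u t i * v t j) : nnRank A ≤ r :=
  Nat.sInf_le ⟨u, v, hu, hv, h⟩

theorem stmt_19 {n : ℕ} (hn : 2 ≤ n) (A : Matrix (Fin n) (Fin n) ℝ)
    (hA : ∀ i j, 0 ≤ A i j)
    (htri : ∀ i j : Fin n, 1 < |(i : ℤ) - (j : ℤ)| → A i j = 0)
    (hsub : ∀ i j : Fin n, (i : ℕ) = (j : ℕ) + 1 → 0 < A i j)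
    (hsup : ∀ i j : Fin n, (j : ℕ) = (i : ℕ) + 1 → 0 < A i j)
    (h11 : 0 < A ⟨0, by omega⟩ ⟨0, by omega⟩) :
    nnRank A = n - 1 ↔
      ∃ R : Matrix (Fin n) (Fin n) ℝ,
        (∃ u v : Fin n → ℝ, (∀ i, 0 ≤ u i) ∧ (∀ j, 0 ≤ v j) ∧
          ∀ i j, R i j = u i * v j) ∧
        (∀ j, R ⟨0, by omega⟩ j = A ⟨0, by omega⟩ j) ∧
        (∀ i, R i ⟨0, by omega⟩ = A i ⟨0, by omega⟩) ∧
        (∀ i j, 0 ≤ (A - R) i j) ∧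
        nnRank (A - R) = n - 2 := by
  obtain ⟨m, rfl⟩ : ∃ m, n = m + 2 := ⟨n - 2, by omega⟩

  have hz0 : ∀ i j : Fin (m+2), ((j:ℕ)+1 < (i:ℕ) ∨ (i:ℕ)+1 < (j:ℕ)) → A i j = 0 :=
    fun i j h => htri i j (by rw [lt_abs]; omega)
  constructor
  · -- forward direction
    intro hrank
    rw [show m + 2 - 1 = m + 1 from rfl] at hrank
    have hspec := nnRank_spec A hA
    rw [hrank] at hspec
    obtain ⟨u, v, hu, hv, hsum⟩ := hspec
    have hterm : ∀ t i j, u t i * v t j ≤ A i j := fun t i j =>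
      (hsum i j) ▸ Finset.single_le_sum
        (fun t' _ => mul_nonneg (hu t' i) (hv t' j)) (Finset.mem_univ t)
    have hz : (0:ℕ) < m + 2 := by omega
    -- the term covering the (0,0) entry
    have ht0 : ∃ t, 0 < u t ⟨0, hz⟩ * v t ⟨0, hz⟩ := by
      by_contra h
      push_neg at h
      have h0 : A ⟨0, hz⟩ ⟨0, hz⟩ = 0 := by
        rw [hsum]
        exact Finset.sum_eq_zero
          (fun t _ => le_antisymm (h t) (mul_nonneg (hu t _) (hv t _)))
      have h11' : 0 < A ⟨0, hz⟩ ⟨0, hz⟩ := h11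
      rw [h0] at h11'
      exact lt_irrefl _ h11'
    obtain ⟨t0, ht0⟩ := ht0
    have hu0 : 0 < u t0 ⟨0, hz⟩ := by
      rcases lt_or_eq_of_le (hu t0 ⟨0, hz⟩) with h | h
      · exact h
      · rw [← h, zero_mul] at ht0; exact absurd ht0 (lt_irrefl 0)
    have hv0 : 0 < v t0 ⟨0, hz⟩ := by
      rcases lt_or_eq_of_le (hv t0 ⟨0, hz⟩) with h | h
      · exact h
      · rw [← h, mul_zero] at ht0; exact absurd ht0 (lt_irrefl 0)
    -- F1 : a term touching row 0 has zero columns ≥ 2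
    have hF1 : ∀ t, 0 < u t ⟨0, hz⟩ → ∀ j : Fin (m+2), 2 ≤ (j:ℕ) → v t j = 0 := by
      intro t ht j hj
      have h0 : A ⟨0, hz⟩ j = 0 := hz0 _ j (Or.inr (by show 0 + 1 < (j:ℕ); omega))
      have h2 := hterm t ⟨0, hz⟩ j
      rw [h0] at h2
      have h3 : v t j ≤ 0 := by nlinarith [hv t j]
      exact le_antisymm h3 (hv t j)
    -- F2 : a term touching column 0 has zero rows ≥ 2
    have hF2 : ∀ t, 0 < v t ⟨0, hz⟩ → ∀ i : Fin (m+2), 2 ≤ (i:ℕ) → u t i = 0 := by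
      intro t ht i hi
      have h0 : A i ⟨0, hz⟩ = 0 := hz0 i _ (Or.inl (by show 0 + 1 < (i:ℕ); omega))
      have h2 := hterm t i ⟨0, hz⟩
      rw [h0] at h2
      have h3 : u t i ≤ 0 := by nlinarith [hu t i]
      exact le_antisymm h3 (hu t i)
    -- Claim: t0 is the only term touching row 0 or column 0
    have hclaim : ∀ t1, t1 ≠ t0 → u t1 ⟨0, hz⟩ = 0 ∧ v t1 ⟨0, hz⟩ = 0 := by
      intro t1 hne1
      by_contra hcon
      have hvne : (t1:ℕ) ≠ (t0:ℕ) := fun h => hne1 (Fin.ext h)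
      have hm1 : 1 ≤ m := by
        have h1 := t0.isLt
        have h2 := t1.isLt
        omega
      have ht1mem : t1 ∈ Finset.univ.erase t0 :=
        Finset.mem_erase.mpr ⟨hne1, Finset.mem_univ _⟩
      set s : Finset (Fin (m+1)) := (Finset.univ.erase t0).erase t1 with hs
      have hcard : s.card = m - 1 := by
        rw [hs, Finset.card_erase_of_mem ht1mem,
          Finset.card_erase_of_mem (Finset.mem_univ _), Finset.card_univ,
          Fintype.card_fin]
        omega
      set A' : Matrix (Fin (m+2)) (Fin (m+2)) ℝ :=
        fun i j => A i j - u t0 i * v t0 j - u t1 i * v t1 j with hA'def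
      have hA' : ∀ i j, A' i j = ∑ t ∈ s, u t i * v t j := by
        intro i j
        have h1 := Finset.sum_erase_add Finset.univ
          (fun t => u t i * v t j) (Finset.mem_univ t0)
        have h2 := Finset.sum_erase_add (Finset.univ.erase t0)
          (fun t => u t i * v t j) ht1mem
        have h3 := hsum i j
        show A i j - u t0 i * v t0 j - u t1 i * v t1 j = _
        rw [h3, ← h1, ← h2]
        ring
      have hor : 0 < u t1 ⟨0, hz⟩ ∨ 0 < v t1 ⟨0, hz⟩ := by
        rcases not_and_or.mp hcon with h | h
        · exact Or.inl (lt_of_le_of_ne (hu t1 _) (Ne.symm h))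
        · exact Or.inr (lt_of_le_of_ne (hv t1 _) (Ne.symm h))
      rcases hor with hpos | hpos
      · -- both t0 and t1 vanish on columns ≥ 2
        have hk := count_le s A' u v hA'
          (fun a : Fin m => ⟨a.val + 1, by omega⟩)
          (fun b : Fin m => ⟨b.val + 2, by omega⟩)
          (fun a b hab => by
            show A _ _ - u t0 _ * v t0 _ - u t1 _ * v t1 _ = 0
            rw [hF1 t0 hu0 ⟨b.val+2, by omega⟩ (by show 2 ≤ b.val + 2; omega),
              hF1 t1 hpos ⟨b.val+2, by omega⟩ (by show 2 ≤ b.val + 2; omega),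
              mul_zero, mul_zero, sub_zero, sub_zero]
            refine hz0 _ _ (Or.inr ?_)
            show a.val + 1 + 1 < b.val + 2
            simp only [Fin.lt_def] at hab
            omega)
          (fun a => by
            show A _ _ - u t0 _ * v t0 _ - u t1 _ * v t1 _ ≠ 0
            rw [hF1 t0 hu0 ⟨a.val+2, by omega⟩ (by show 2 ≤ a.val + 2; omega),
              hF1 t1 hpos ⟨a.val+2, by omega⟩ (by show 2 ≤ a.val + 2; omega),
              mul_zero, mul_zero, sub_zero, sub_zero]
            exact ne_of_gt (hsup _ _ (by show a.val + 2 = a.val + 1 + 1; omega)))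
        rw [hcard] at hk
        omega
      · -- both t0 and t1 vanish on rows ≥ 2
        have hk := count_le' s A' u v hA'
          (fun a : Fin m => ⟨a.val + 2, by omega⟩)
          (fun b : Fin m => ⟨b.val + 1, by omega⟩)
          (fun a b hab => by
            show A _ _ - u t0 _ * v t0 _ - u t1 _ * v t1 _ = 0
            rw [hF2 t0 hv0 ⟨a.val+2, by omega⟩ (by show 2 ≤ a.val + 2; omega),
              hF2 t1 hpos ⟨a.val+2, by omega⟩ (by show 2 ≤ a.val + 2; omega),
              zero_mul, zero_mul, sub_zero, sub_zero]
            refine hz0 _ _ (Or.inl ?_)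
            show b.val + 1 + 1 < a.val + 2
            simp only [Fin.lt_def] at hab
            omega)
          (fun a => by
            show A _ _ - u t0 _ * v t0 _ - u t1 _ * v t1 _ ≠ 0
            rw [hF2 t0 hv0 ⟨a.val+2, by omega⟩ (by show 2 ≤ a.val + 2; omega),
              hF2 t1 hpos ⟨a.val+2, by omega⟩ (by show 2 ≤ a.val + 2; omega),
              zero_mul, zero_mul, sub_zero, sub_zero]
            exact ne_of_gt (hsub _ _ (by show a.val + 2 = a.val + 1 + 1; omega)))
        rw [hcard] at hk
        omega
    -- define R
    set R0 : Matrix (Fin (m+2)) (Fin (m+2)) ℝ := fun i j => u t0 i * v t0 j with hR0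
    have hsplit : ∀ i j, A i j - u t0 i * v t0 j =
        ∑ t' : Fin m, u (t0.succAbove t') i * v (t0.succAbove t') j := by
      intro i j
      rw [hsum, Fin.sum_univ_succAbove (fun t => u t i * v t j) t0]
      ring
    have hsubnn : ∀ i j : Fin (m+2),
        0 ≤ (A - R0) i j := by
      intro i j
      rw [Matrix.sub_apply]
      show 0 ≤ A i j - u t0 i * v t0 j
      rw [hsplit]
      exact Finset.sum_nonneg (fun t' _ => mul_nonneg (hu _ i) (hv _ j))
    refine ⟨R0,
      ⟨u t0, v t0, fun i => hu t0 i, fun j => hv t0 j, fun i j => rfl⟩, ?_, ?_, hsubnn, ?_⟩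
    · intro j
      show u t0 ⟨0, hz⟩ * v t0 j = A ⟨0, hz⟩ j
      rw [hsum]
      exact (Finset.sum_eq_single (f := fun t => u t ⟨0, hz⟩ * v t j) t0
        (fun b _ hb => by show u b ⟨0, hz⟩ * v b j = 0; rw [(hclaim b hb).1, zero_mul])
        (fun h => absurd (Finset.mem_univ t0) h)).symm
    · intro i
      show u t0 i * v t0 ⟨0, hz⟩ = A i ⟨0, hz⟩
      rw [hsum]
      exact (Finset.sum_eq_single (f := fun t => u t i * v t ⟨0, hz⟩) t0
        (fun b _ hb => by show u b i * v b ⟨0, hz⟩ = 0; rw [(hclaim b hb).2, mul_zero])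
        (fun h => absurd (Finset.mem_univ t0) h)).symm
    · -- nnRank (A - R) = m
      show nnRank _ = m + 2 - 2
      rw [show m + 2 - 2 = m from rfl]
      refine le_antisymm ?_ ?_
      · refine nnRank_le _ (fun t' => u (t0.succAbove t'))
          (fun t' => v (t0.succAbove t'))
          (fun t' i => hu _ i) (fun t' j => hv _ j) (fun i j => ?_)
        rw [Matrix.sub_apply]
        exact hsplit i j
      · obtain ⟨u', v', hu', hv', hsum'⟩ := nnRank_spec (A - R0) hsubnn
        have hk := count_le Finset.univ (A - R0) u' v'
          (fun i j => hsum' i j)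
          (fun a : Fin m => ⟨a.val + 1, by omega⟩)
          (fun b : Fin m => ⟨b.val + 2, by omega⟩)
          (fun a b hab => by
            rw [Matrix.sub_apply]
            show A _ _ - u t0 _ * v t0 _ = 0
            rw [hF1 t0 hu0 ⟨b.val+2, by omega⟩ (by show 2 ≤ b.val + 2; omega),
              mul_zero, sub_zero]
            refine hz0 _ _ (Or.inr ?_)
            show a.val + 1 + 1 < b.val + 2
            simp only [Fin.lt_def] at hab
            omega)
          (fun a => by
            rw [Matrix.sub_apply]
            show A _ _ - u t0 _ * v t0 _ ≠ 0
            rw [hF1 t0 hu0 ⟨a.val+2, by omega⟩ (by show 2 ≤ a.val + 2; omega),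
              mul_zero, sub_zero]
            exact ne_of_gt (hsup _ _ (by show a.val + 2 = a.val + 1 + 1; omega)))
        rwa [Finset.card_univ, Fintype.card_fin] at hk
  · -- backward direction
    rintro ⟨R, ⟨uR, vR, huR, hvR, hR⟩, hrow, hcol, hsubnn, hnr⟩
    rw [show m + 2 - 2 = m from rfl] at hnr
    show nnRank A = m + 2 - 1
    rw [show m + 2 - 1 = m + 1 from rfl]
    refine le_antisymm ?_ ?_
    · -- ≤ : combine R with a decomposition of A - R of size m
      have hspec := nnRank_spec (A - R) hsubnn
      rw [hnr] at hspec
      obtain ⟨u', v', hu', hv', hsum'⟩ := hspec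
      refine nnRank_le A (Fin.cons uR u') (Fin.cons vR v') ?_ ?_ ?_
      · intro t i
        refine Fin.cases ?_ ?_ t
        · rw [Fin.cons_zero]; exact huR i
        · intro t'; rw [Fin.cons_succ]; exact hu' t' i
      · intro t j
        refine Fin.cases ?_ ?_ t
        · rw [Fin.cons_zero]; exact hvR j
        · intro t'; rw [Fin.cons_succ]; exact hv' t' j
      · intro i j
        rw [Fin.sum_univ_succ]
        simp only [Fin.cons_zero, Fin.cons_succ]
        have h1 : A i j = R i j + (A - R) i j := by
          rw [Matrix.sub_apply]; ring
        rw [h1, hR i j, hsum' i j]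
    · -- ≥ : lower bound from the triangular submatrix
      obtain ⟨u, v, hu, hv, hsum⟩ := nnRank_spec A hA
      have hk := count_le' Finset.univ A u v (fun i j => hsum i j)
        (fun a : Fin (m+1) => ⟨a.val + 1, by omega⟩)
        (fun b : Fin (m+1) => ⟨b.val, by omega⟩)
        (fun a b hab => by
          refine hz0 _ _ (Or.inl ?_)
          show b.val + 1 < a.val + 1
          simp only [Fin.lt_def] at hab
          omega)
        (fun a => ne_of_gt (hsub _ _ (by show a.val + 1 = a.val + 1; rfl)))
      rwa [Finset.card_univ, Fintype.card_fin] at hk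
end
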